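/- Consider the logistic loss f(θ) = (1/n)·Σᵢ ln(1 + exp(−yᵢ·⟨xᵢ, θ⟩)) with xᵢ ∈ ℝᵈ, yᵢ ∈ {−1, 1}. Then for all θ, ‖∇²f(θ)‖_{p→q} ≤ (maxᵢ ‖xᵢ‖_q²)·f(θ), where 1/p + 1/q = 1. -/

import Mathlib

open scoped BigOperators

noncomputable def lpNorm (p : ENNReal) {ι : Type*} [Fintype ι] (x : ι → ℝ) : ℝ :=
  ‖(WithLp.equiv p (ι → ℝ)).symm x‖

noncomputable def opNorm (p q : ENNReal) {ι κ : Type*} [Fintype ι] [Fintype κ]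
    (A : Matrix ι κ ℝ) : ℝ :=
  sSup {c | ∃ x : κ → ℝ, lpNorm p x ≤ 1 ∧ c = lpNorm q (A.mulVec x)}

noncomputable def dotCLM {n : ℕ} (v : Fin n → ℝ) : (Fin n → ℝ) →L[ℝ] ℝ :=
  LinearMap.toContinuousLinearMap (∑ i, v i • (LinearMap.proj i : (Fin n → ℝ) →ₗ[ℝ] ℝ))

noncomputable def mulVecCLM {m n : ℕ} (M : Matrix (Fin m) (Fin n) ℝ) :
    (Fin n → ℝ) →L[ℝ] (Fin m → ℝ) :=
  LinearMap.toContinuousLinearMap M.mulVecLin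

/-! The Hessian of `θ ↦ (1/n) Σᵢ ℓ(⟨wᵢ, θ⟩)` is `(1/n) Σᵢ ℓ''(⟨wᵢ, θ⟩) wᵢ wᵢᵀ`, and by Hölder's
inequality the rank-one matrix `w wᵀ` has `p → q` norm at most `‖w‖_q²`; the triangle inequality
then bounds the Hessian norm by `(maxᵢ ‖wᵢ‖_q²) · (1/n) Σᵢ |ℓ''(⟨wᵢ, θ⟩)|`. For the logistic loss
`ℓ(t) = log (1 + eᵗ)` and `wᵢ = -yᵢ xᵢ` one has `ℓ'' = σ (1 - σ) ≤ σ ≤ ℓ` for the sigmoid `σ`,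
and `‖wᵢ‖_q = ‖xᵢ‖_q` because `yᵢ = ±1`. -/

open scoped ENNReal
open Matrix

section lpNorm

variable {ι : Type*} [Fintype ι]

lemma lpNorm_nonneg (p : ℝ≥0∞) [Fact (1 ≤ p)] (u : ι → ℝ) : 0 ≤ lpNorm p u :=
  norm_nonneg _

lemma abs_le_lpNorm (p : ℝ≥0∞) [Fact (1 ≤ p)] (u : ι → ℝ) (i : ι) : |u i| ≤ lpNorm p u :=
  PiLp.norm_apply_le (WithLp.toLp p u) i

lemma lpNorm_one (u : ι → ℝ) : lpNorm 1 u = ∑ i, |u i| :=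
  PiLp.norm_eq_of_L1 (WithLp.toLp 1 u)

lemma lpNorm_eq_sum {p : ℝ≥0∞} (hp : 0 < p.toReal) (u : ι → ℝ) :
    lpNorm p u = (∑ i, |u i| ^ p.toReal) ^ (1 / p.toReal) :=
  PiLp.norm_eq_sum hp (WithLp.toLp p u)

lemma lpNorm_smul (p : ℝ≥0∞) [Fact (1 ≤ p)] (c : ℝ) (u : ι → ℝ) :
    lpNorm p (c • u) = |c| * lpNorm p u :=
  norm_smul c (WithLp.toLp p u)

lemma lpNorm_sum_le (p : ℝ≥0∞) [Fact (1 ≤ p)] {κ : Type*} (s : Finset κ) (u : κ → ι → ℝ) :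
    lpNorm p (∑ k ∈ s, u k) ≤ ∑ k ∈ s, lpNorm p (u k) := by
  simpa [lpNorm] using norm_sum_le s fun k => WithLp.toLp p (u k)

lemma sum_abs_mul_le_lpNorm_top_mul_lpNorm_one (u v : ι → ℝ) :
    ∑ i, |u i| * |v i| ≤ lpNorm ⊤ u * lpNorm 1 v := by
  rw [lpNorm_one, Finset.mul_sum]
  gcongr with i
  exact abs_le_lpNorm ⊤ u i

lemma sum_abs_mul_le_lpNorm_mul (p q : ℝ≥0∞) [p.HolderConjugate q] (u v : ι → ℝ) :
    ∑ i, |u i| * |v i| ≤ lpNorm p u * lpNorm q v := by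
  rcases eq_or_ne p ⊤ with rfl | hp
  · obtain rfl : q = 1 := (ENNReal.HolderConjugate.eq_top_iff_eq_one ⊤ q).1 rfl
    exact sum_abs_mul_le_lpNorm_top_mul_lpNorm_one u v
  rcases eq_or_ne q ⊤ with rfl | hq
  · obtain rfl : p = 1 := (ENNReal.HolderConjugate.eq_top_iff_eq_one ⊤ p).1 rfl
    simpa only [mul_comm] using sum_abs_mul_le_lpNorm_top_mul_lpNorm_one v u
  have hpq := ENNReal.HolderConjugate.toReal_of_ne_top hp hq
  rw [lpNorm_eq_sum hpq.pos, lpNorm_eq_sum hpq.symm.pos]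
  exact Real.inner_le_Lp_mul_Lq_of_nonneg _ hpq (fun i _ => abs_nonneg _) fun i _ => abs_nonneg _

lemma abs_dotProduct_le_lpNorm_mul (p q : ℝ≥0∞) [p.HolderConjugate q] (u v : ι → ℝ) :
    |u ⬝ᵥ v| ≤ lpNorm p u * lpNorm q v :=
  calc |u ⬝ᵥ v| ≤ ∑ i, |u i| * |v i| := by
        simpa only [dotProduct, abs_mul] using Finset.abs_sum_le_sum_abs (fun i => u i * v i) _
    _ ≤ lpNorm p u * lpNorm q v := sum_abs_mul_le_lpNorm_mul p q u v

end lpNorm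

section opNorm

variable {ι κ : Type*} [Fintype ι]

lemma opNorm_le_of_lpNorm_mulVec_le {p q : ℝ≥0∞} {m : Type*} [Fintype m] (A : Matrix m ι ℝ)
    {C : ℝ} (hC : 0 ≤ C) (h : ∀ v, lpNorm p v ≤ 1 → lpNorm q (A *ᵥ v) ≤ C) :
    opNorm p q A ≤ C :=
  Real.sSup_le (by rintro _ ⟨v, hv, rfl⟩; exact h v hv) hC

lemma lpNorm_vecMulVec_self_mulVec_le (p q : ℝ≥0∞) [p.HolderConjugate q] (w v : ι → ℝ) :
    lpNorm q (vecMulVec w w *ᵥ v) ≤ lpNorm q w ^ 2 * lpNorm p v := by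
  have : Fact (1 ≤ q) := ⟨ENNReal.HolderConjugate.one_le q p⟩
  calc lpNorm q (vecMulVec w w *ᵥ v) = |w ⬝ᵥ v| * lpNorm q w := by
        rw [vecMulVec_mulVec, op_smul_eq_smul, lpNorm_smul]
    _ ≤ lpNorm q w * lpNorm p v * lpNorm q w := by
        gcongr
        · exact lpNorm_nonneg q w
        · exact abs_dotProduct_le_lpNorm_mul q p w v
    _ = lpNorm q w ^ 2 * lpNorm p v := by ring

lemma opNorm_sum_smul_vecMulVec_self_le (p q : ℝ≥0∞) [p.HolderConjugate q] (s : Finset κ)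
    (a : κ → ℝ) (w : κ → ι → ℝ) :
    opNorm p q (∑ k ∈ s, a k • vecMulVec (w k) (w k) : Matrix ι ι ℝ) ≤
      ∑ k ∈ s, |a k| * lpNorm q (w k) ^ 2 := by
  have : Fact (1 ≤ q) := ⟨ENNReal.HolderConjugate.one_le q p⟩
  have : Fact (1 ≤ p) := ⟨ENNReal.HolderConjugate.one_le p q⟩
  refine opNorm_le_of_lpNorm_mulVec_le _ (by positivity) fun v hv => ?_
  calc lpNorm q ((∑ k ∈ s, a k • vecMulVec (w k) (w k)) *ᵥ v)
      ≤ ∑ k ∈ s, |a k| * lpNorm q (vecMulVec (w k) (w k) *ᵥ v) := by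
        simpa only [sum_mulVec, smul_mulVec, lpNorm_smul] using
          lpNorm_sum_le q s fun k => a k • (vecMulVec (w k) (w k) *ᵥ v)
    _ ≤ ∑ k ∈ s, |a k| * (lpNorm q (w k) ^ 2 * 1) := by
        gcongr with k
        exact (lpNorm_vecMulVec_self_mulVec_le p q (w k) v).trans (by gcongr)
    _ = ∑ k ∈ s, |a k| * lpNorm q (w k) ^ 2 := by simp only [mul_one]

lemma opNorm_sum_smul_vecMulVec_self_le_mul_sum (p q : ℝ≥0∞) [p.HolderConjugate q]
    (s : Finset κ) (a : κ → ℝ) (w : κ → ι → ℝ) {b : κ → ℝ} {M : ℝ}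
    (ha : ∀ k ∈ s, |a k| ≤ b k) (hw : ∀ k ∈ s, lpNorm q (w k) ^ 2 ≤ M) :
    opNorm p q (∑ k ∈ s, a k • vecMulVec (w k) (w k) : Matrix ι ι ℝ) ≤ M * ∑ k ∈ s, b k := by
  refine (opNorm_sum_smul_vecMulVec_self_le p q s a w).trans ?_
  rw [Finset.mul_sum]
  refine Finset.sum_le_sum fun k hk => ?_
  rw [mul_comm M]
  exact mul_le_mul (ha k hk) (hw k hk) (sq_nonneg _) ((abs_nonneg _).trans (ha k hk))

end opNorm

section Derivatives

lemma dotCLM_apply {d : ℕ} (u v : Fin d → ℝ) : dotCLM u v = u ⬝ᵥ v := by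
  simp [dotCLM, dotProduct]

lemma dotCLM_injective {d : ℕ} : Function.Injective (dotCLM : (Fin d → ℝ) → _) := by
  intro u v h
  ext j
  simpa [dotCLM_apply] using congr($h (Pi.single j 1))

lemma mulVecCLM_apply {m d : ℕ} (M : Matrix (Fin m) (Fin d) ℝ) (v : Fin d → ℝ) :
    mulVecCLM M v = M *ᵥ v :=
  rfl

lemma mulVecCLM_injective {m d : ℕ} :
    Function.Injective (mulVecCLM : Matrix (Fin m) (Fin d) ℝ → _) :=
  fun _ _ h => mulVec_injective (funext fun v => congr($h v))

variable {ι : Type*} [Fintype ι] {d : ℕ} {ℓ ℓ' ℓ'' : ℝ → ℝ} (c : ℝ) (w : ι → Fin d → ℝ)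

lemma hasFDerivAt_dotProduct (u θ : Fin d → ℝ) : HasFDerivAt (u ⬝ᵥ ·) (dotCLM u) θ := by
  simpa only [← dotCLM_apply] using (dotCLM u).hasFDerivAt

lemma hasFDerivAt_const_mul_sum_comp_dotProduct (hℓ : ∀ t, HasDerivAt ℓ (ℓ' t) t)
    (θ : Fin d → ℝ) :
    HasFDerivAt (fun θ => c * ∑ i, ℓ (w i ⬝ᵥ θ))
      (dotCLM (c • ∑ i, ℓ' (w i ⬝ᵥ θ) • w i)) θ := by
  refine ((HasFDerivAt.fun_sum fun i _ => (hℓ (w i ⬝ᵥ θ)).comp_hasFDerivAt θ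
    (hasFDerivAt_dotProduct (w i) θ)).const_mul c).congr_fderiv ?_
  ext v
  simp [dotCLM_apply, Finset.mul_sum, sum_dotProduct]

lemma hasFDerivAt_const_smul_sum_smul_comp_dotProduct (hℓ' : ∀ t, HasDerivAt ℓ' (ℓ'' t) t)
    (θ : Fin d → ℝ) :
    HasFDerivAt (fun θ => c • ∑ i, ℓ' (w i ⬝ᵥ θ) • w i)
      (mulVecCLM (c • ∑ i, ℓ'' (w i ⬝ᵥ θ) • vecMulVec (w i) (w i))) θ := by
  refine ((HasFDerivAt.fun_sum fun i _ => ((hℓ' (w i ⬝ᵥ θ)).comp_hasFDerivAt θ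
    (hasFDerivAt_dotProduct (w i) θ)).smul_const (w i)).const_smul c).congr_fderiv ?_
  ext v : 1
  simp [mulVecCLM_apply, dotCLM_apply, Finset.smul_sum, sum_mulVec, smul_mulVec,
    vecMulVec_mulVec, smul_smul, mul_assoc]

lemma hessian_eq_of_hasFDerivAt_const_mul_sum_comp_dotProduct
    (hℓ : ∀ t, HasDerivAt ℓ (ℓ' t) t) (hℓ' : ∀ t, HasDerivAt ℓ' (ℓ'' t) t)
    {f : (Fin d → ℝ) → ℝ} {g : (Fin d → ℝ) → (Fin d → ℝ)}
    {H : (Fin d → ℝ) → Matrix (Fin d) (Fin d) ℝ} (hf : ∀ θ, f θ = c * ∑ i, ℓ (w i ⬝ᵥ θ))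
    (hg : ∀ θ, HasFDerivAt f (dotCLM (g θ)) θ) (hH : ∀ θ, HasFDerivAt g (mulVecCLM (H θ)) θ)
    (θ : Fin d → ℝ) :
    H θ = c • ∑ i, ℓ'' (w i ⬝ᵥ θ) • vecMulVec (w i) (w i) := by
  obtain rfl : f = fun θ => c * ∑ i, ℓ (w i ⬝ᵥ θ) := funext hf
  obtain rfl : g = fun θ => c • ∑ i, ℓ' (w i ⬝ᵥ θ) • w i := funext fun θ =>
    dotCLM_injective ((hg θ).unique (hasFDerivAt_const_mul_sum_comp_dotProduct c w hℓ θ))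
  exact mulVecCLM_injective
    ((hH θ).unique (hasFDerivAt_const_smul_sum_smul_comp_dotProduct c w hℓ' θ))

end Derivatives

section Logistic

open Real

lemma hasDerivAt_log_one_add_exp (t : ℝ) :
    HasDerivAt (fun t => log (1 + exp t)) (sigmoid t) t := by
  convert ((hasDerivAt_exp t).const_add 1).log (by positivity) using 1
  rw [sigmoid_def, exp_neg]
  field_simp
  ring

lemma sigmoid_le_log_one_add_exp (t : ℝ) : sigmoid t ≤ log (1 + exp t) := by
  convert one_sub_inv_le_log_of_pos (x := 1 + exp t) (by positivity) using 1
  rw [sigmoid_def, exp_neg]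
  field_simp
  ring

lemma abs_sigmoid_mul_one_sub_sigmoid_le_log_one_add_exp (t : ℝ) :
    |sigmoid t * (1 - sigmoid t)| ≤ log (1 + exp t) := by
  have h₀ := sigmoid_nonneg t
  have h₁ := sigmoid_le_one t
  rw [abs_of_nonneg (by nlinarith)]
  nlinarith [sigmoid_le_log_one_add_exp t]

end Logistic

theorem stmt10_general {n d : ℕ} (p q : ENNReal)
    (hpq : 1/p + 1/q = 1)
    (x : Fin n → Fin d → ℝ) (y : Fin n → ℝ) (hy : ∀ i, y i = 1 ∨ y i = -1)
    (f : (Fin d → ℝ) → ℝ)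
    (hf : ∀ θ, f θ = (1 / (n : ℝ)) *
      ∑ i, Real.log (1 + Real.exp (-(y i) * ∑ j, x i j * θ j)))
    (g : (Fin d → ℝ) → (Fin d → ℝ))
    (Hess : (Fin d → ℝ) → Matrix (Fin d) (Fin d) ℝ)
    (hgrad : ∀ θ, HasFDerivAt f (dotCLM (g θ)) θ)
    (hhess : ∀ θ, HasFDerivAt g (mulVecCLM (Hess θ)) θ) :
    ∀ θ, opNorm p q (Hess θ) ≤ (⨆ i, (lpNorm q (x i)) ^ 2) * f θ := by
  intro θ
  have : p.HolderConjugate q := ENNReal.holderConjugate_iff.2 (by simpa only [one_div] using hpq)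
  have : Fact (1 ≤ q) := ⟨ENNReal.HolderConjugate.one_le q p⟩
  set w : Fin n → Fin d → ℝ := fun i => -(y i) • x i
  have hfw : ∀ θ, f θ = 1 / n * ∑ i, Real.log (1 + Real.exp (w i ⬝ᵥ θ)) := fun θ => by
    simp [hf, w, dotProduct, Finset.mul_sum, mul_assoc]
  have hw : ∀ i, lpNorm q (w i) = lpNorm q (x i) := fun i => by
    rw [lpNorm_smul, abs_neg]
    rcases hy i with h | h <;> simp [h]
  rw [hessian_eq_of_hasFDerivAt_const_mul_sum_comp_dotProduct _ w hasDerivAt_log_one_add_exp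
    Real.hasDerivAt_sigmoid hfw hgrad hhess θ, Finset.smul_sum, hfw, Finset.mul_sum]
  simp_rw [smul_smul]
  refine opNorm_sum_smul_vecMulVec_self_le_mul_sum p q _ _ _ (fun i _ => ?_) fun i _ => ?_
  · rw [abs_mul, abs_of_nonneg (by positivity)]
    gcongr
    exact abs_sigmoid_mul_one_sub_sigmoid_le_log_one_add_exp _
  · rw [hw i]
    exact le_ciSup (f := fun i => lpNorm q (x i) ^ 2) (Set.finite_range _).bddAbove i

/-- Logistic loss: Hessian bound ‖∇²f‖ ≤ (maxᵢ ‖xᵢ‖_q²) f. -/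
theorem stmt10 {n d : ℕ} (hn : 0 < n) (p q : ENNReal) (hp : 1 ≤ p) (hq : 1 ≤ q)
    (hpq : 1/p + 1/q = 1)
    (x : Fin n → Fin d → ℝ) (y : Fin n → ℝ) (hy : ∀ i, y i = 1 ∨ y i = -1)
    (f : (Fin d → ℝ) → ℝ)
    (hf : ∀ θ, f θ = (1 / (n : ℝ)) *
      ∑ i, Real.log (1 + Real.exp (-(y i) * ∑ j, x i j * θ j)))
    (g : (Fin d → ℝ) → (Fin d → ℝ))
    (Hess : (Fin d → ℝ) → Matrix (Fin d) (Fin d) ℝ)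
    (hgrad : ∀ θ, HasFDerivAt f (dotCLM (g θ)) θ)
    (hhess : ∀ θ, HasFDerivAt g (mulVecCLM (Hess θ)) θ) :
    ∀ θ, opNorm p q (Hess θ) ≤ (⨆ i, (lpNorm q (x i)) ^ 2) * f θ :=
  stmt10_general p q hpq x y hy f hf g Hess hgrad hhess
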